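/- For every integer n ≥ 2, the smallest Poisson ideal I_n of A = k[e,f,h] containing eⁿ and 4ef + h² (with respect to the bracket {p, q} = h(∂_e p · ∂_f q − ∂_f p · ∂_e q) − 2e(∂_e p · ∂_h q − ∂_h p · ∂_e q) + 2f(∂_f p · ∂_h q − ∂_h p · ∂_f q)) is not a prime ideal of A: indeed h^{2n} ∈ I_n but h ∉ I_n. -/
import Mathlib


open MvPolynomial

noncomputable section

variable (k : Type*) [Field k] [CharZero k]

set_option linter.unusedSectionVars false

/-- The polynomial ring `A = k[e,f,h]`, with `e = X 0`, `f = X 1`, `h = X 2`. -/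
abbrev A := MvPolynomial (Fin 3) k

/-- The Poisson bracket
`{p, q} = h(∂ₑp ∂_f q − ∂_f p ∂ₑq) − 2e(∂ₑp ∂ₕq − ∂ₕp ∂ₑq) + 2f(∂_f p ∂ₕq − ∂ₕp ∂_f q)`
on `A = k[e,f,h]`. -/
def pb (p q : A k) : A k :=
  X 2 * (pderiv 0 p * pderiv 1 q - pderiv 1 p * pderiv 0 q)
    - 2 * X 0 * (pderiv 0 p * pderiv 2 q - pderiv 2 p * pderiv 0 q)
    + 2 * X 1 * (pderiv 1 p * pderiv 2 q - pderiv 2 p * pderiv 1 q)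

/-- An ideal `I` of `A` is a Poisson ideal if `{p, r} ∈ I` for all `p ∈ I`, `r ∈ A`. -/
def IsPoissonIdeal (I : Ideal (A k)) : Prop :=
  ∀ p ∈ I, ∀ r : A k, pb k p r ∈ I

/-- `I_n`, the smallest Poisson ideal of `A = k[e,f,h]` containing `eⁿ` and
`4ef + h²`: the intersection of all Poisson ideals containing them. -/
def In (n : ℕ) : Ideal (A k) :=
  sInf {I : Ideal (A k) |
    IsPoissonIdeal k I ∧ (X 0 : A k) ^ n ∈ I ∧ 4 * X 0 * X 1 + (X 2 : A k) ^ 2 ∈ I}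

lemma pb_zero_left (r : A k) : pb k 0 r = 0 := by simp [pb]

lemma pb_add_left (p q r : A k) : pb k (p + q) r = pb k p r + pb k q r := by
  simp only [pb, map_add]; ring

lemma pb_mul_left (p q r : A k) : pb k (p * q) r = p * pb k q r + q * pb k p r := by
  simp only [pb, pderiv_mul]; ring

/-- The ideal generated by a set `S` such that brackets of elements of `S` fall back
into the span is a Poisson ideal. -/
lemma isPoissonIdeal_span (S : Set (A k))
    (h : ∀ s ∈ S, ∀ r : A k, pb k s r ∈ Ideal.span S) :
    IsPoissonIdeal k (Ideal.span S) := by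
  intro p hp r
  induction hp using Submodule.span_induction with
  | mem x hx => exact h x hx r
  | zero => simp [pb_zero_left]
  | add x y hx hy ihx ihy => rw [pb_add_left]; exact add_mem ihx ihy
  | smul a x hx ihx =>
      rw [smul_eq_mul, pb_mul_left]
      exact add_mem (Ideal.mul_mem_left _ _ ihx) (Ideal.mul_mem_right _ _ hx)

lemma isPoissonIdeal_sup {I J : Ideal (A k)} (hI : IsPoissonIdeal k I)
    (hJ : IsPoissonIdeal k J) : IsPoissonIdeal k (I ⊔ J) := by
  intro p hp r
  rcases Submodule.mem_sup.mp hp with ⟨a, ha, b, hb, rfl⟩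
  rw [pb_add_left]
  exact add_mem (Ideal.mem_sup_left (hI a ha r)) (Ideal.mem_sup_right (hJ b hb r))

lemma isPoissonIdeal_mul {I J : Ideal (A k)} (hI : IsPoissonIdeal k I)
    (hJ : IsPoissonIdeal k J) : IsPoissonIdeal k (I * J) := by
  intro p hp r
  refine Submodule.mul_induction_on hp (fun a ha b hb => ?_) (fun x y hx hy => ?_)
  · rw [pb_mul_left]
    refine add_mem ?_ ?_
    · exact Ideal.mul_mem_mul ha (hJ b hb r)
    · rw [mul_comm b (pb k a r)]; exact Ideal.mul_mem_mul (hI a ha r) hb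
  · rw [pb_add_left]; exact add_mem hx hy

/-- The maximal ideal `m = (e, f, h)` at the origin. -/
def mm : Ideal (A k) := Ideal.span {X 0, X 1, X 2}

lemma isPoissonIdeal_mm : IsPoissonIdeal k (mm k) := by
  apply isPoissonIdeal_span
  intro s hs r
  have h0 : (X 0 : A k) ∈ Ideal.span {X 0, X 1, (X 2 : A k)} := Ideal.subset_span (by simp)
  have h1 : (X 1 : A k) ∈ Ideal.span {X 0, X 1, (X 2 : A k)} := Ideal.subset_span (by simp)
  have h2 : (X 2 : A k) ∈ Ideal.span {X 0, X 1, (X 2 : A k)} := Ideal.subset_span (by simp)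
  rcases hs with rfl | rfl | rfl
  · -- pb e r = h ∂f r - 2 e ∂h r
    have : pb k (X 0) r = (pderiv 1 r) * X 2 + (-(2 * pderiv 2 r)) * X 0 := by
      simp [pb, pderiv_X]; ring
    rw [this]
    exact add_mem (Ideal.mul_mem_left _ _ h2) (Ideal.mul_mem_left _ _ h0)
  · have : pb k (X 1) r = (-(pderiv 0 r)) * X 2 + (2 * pderiv 2 r) * X 1 := by
      simp [pb, pderiv_X]; ring
    rw [this]
    exact add_mem (Ideal.mul_mem_left _ _ h2) (Ideal.mul_mem_left _ _ h1)
  · have : pb k (X 2) r = (2 * pderiv 0 r) * X 0 + (-(2 * pderiv 1 r)) * X 1 := by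
      simp [pb, pderiv_X]; ring
    rw [this]
    exact add_mem (Ideal.mul_mem_left _ _ h0) (Ideal.mul_mem_left _ _ h1)

lemma isPoissonIdeal_pow_mm (n : ℕ) : IsPoissonIdeal k (mm k ^ n) := by
  induction n with
  | zero => intro p _ r; rw [pow_zero, Ideal.one_eq_top]; exact Submodule.mem_top
  | succ m ih =>
      have h := isPoissonIdeal_mul k ih (isPoissonIdeal_mm k)
      rwa [← pow_succ] at h

/-- The Casimir `Ω = 4ef + h²` is central for the bracket. -/
lemma pb_omega (r : A k) : pb k (4 * X 0 * X 1 + (X 2 : A k) ^ 2) r = 0 := by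
  have h4 : ∀ i : Fin 3, pderiv i (4 : A k) = 0 := fun i => by
    rw [show (4 : A k) = C (4 : k) from (map_ofNat C 4).symm, pderiv_C]
  simp only [pb, map_add, pderiv_mul, pderiv_pow, h4]
  simp only [pderiv_X_self, pderiv_X_of_ne (by decide : (0 : Fin 3) ≠ 1),
    pderiv_X_of_ne (by decide : (1 : Fin 3) ≠ 0),
    pderiv_X_of_ne (by decide : (0 : Fin 3) ≠ 2),
    pderiv_X_of_ne (by decide : (2 : Fin 3) ≠ 0),
    pderiv_X_of_ne (by decide : (1 : Fin 3) ≠ 2),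
    pderiv_X_of_ne (by decide : (2 : Fin 3) ≠ 1)]
  ring

lemma isPoissonIdeal_omega :
    IsPoissonIdeal k (Ideal.span {4 * X 0 * X 1 + (X 2 : A k) ^ 2}) := by
  apply isPoissonIdeal_span
  intro s hs r
  rcases hs with rfl
  rw [pb_omega]
  exact Submodule.zero_mem _

/-- for every integer `n ≥ 2`, the smallest Poisson ideal `I_n`
containing `eⁿ` and `4ef + h²` is not a prime ideal of `A = k[e,f,h]`: indeed
`h^(2n) ∈ I_n` but `h ∉ I_n`. -/
theorem In_not_prime (n : ℕ) (hn : 2 ≤ n) :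
    ¬ (In k n).IsPrime ∧ (X 2 : A k) ^ (2 * n) ∈ In k n ∧ (X 2 : A k) ∉ In k n := by
  set Ω : A k := 4 * X 0 * X 1 + (X 2 : A k) ^ 2 with hΩdef
  -- part 1 : h^{2n} ∈ I_n
  have hmem : (X 2 : A k) ^ (2 * n) ∈ In k n := by
    rw [In, Ideal.mem_sInf]
    rintro I ⟨-, he, hO⟩
    obtain ⟨c, hc⟩ := sub_dvd_pow_sub_pow ((X 2 : A k) ^ 2) (-(4 * X 0 * X 1)) n
    have h2 : ((X 2 : A k) ^ 2 - -(4 * X 0 * X 1)) = Ω := by rw [hΩdef]; ring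
    have h3 : (-(4 * X 0 * X 1) : A k) ^ n = ((-4 : A k) * X 1) ^ n * (X 0) ^ n := by
      rw [← mul_pow]; congr 1; ring
    have key : (X 2 : A k) ^ (2 * n) =
        Ω * c + ((-4 : A k) * X 1) ^ n * (X 0) ^ n := by
      rw [pow_mul, ← h3, ← h2]
      linear_combination hc
    rw [key]
    exact add_mem (Ideal.mul_mem_right _ _ hO) (Ideal.mul_mem_left _ _ he)
  -- part 2 : h ∉ I_n, witnessed by the Poisson ideal (Ω) + m^n
  have hnot : (X 2 : A k) ∉ In k n := by
    set J : Ideal (A k) := Ideal.span {Ω} ⊔ mm k ^ n with hJ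
    have hJle : In k n ≤ J := by
      apply sInf_le
      refine ⟨isPoissonIdeal_sup k (isPoissonIdeal_omega k) (isPoissonIdeal_pow_mm k n), ?_, ?_⟩
      · exact Ideal.mem_sup_right (Ideal.pow_mem_pow (Ideal.subset_span (by simp)) n)
      · exact Ideal.mem_sup_left (Ideal.subset_span rfl)
    intro hX2
    have hX2J : (X 2 : A k) ∈ J := hJle hX2
    -- map to dual numbers: e ↦ 0, f ↦ 0, h ↦ ε
    set φ : A k →+* DualNumber k :=
      (aeval (fun i : Fin 3 => if i = 2 then DualNumber.eps else 0) :
        A k →ₐ[k] DualNumber k).toRingHom with hφ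
    have hφ0 : φ (X 0) = 0 := by simp [hφ]
    have hφ1 : φ (X 1) = 0 := by simp [hφ]
    have hφ2 : φ (X 2) = DualNumber.eps := by simp [hφ]
    have hφΩ : φ Ω = 0 := by
      have : φ Ω = 4 * φ (X 0) * φ (X 1) + φ (X 2) ^ 2 := by
        rw [hΩdef]; push_cast [map_add, map_mul, map_pow, map_ofNat]; ring
      rw [this, hφ0, hφ1, hφ2]
      rw [sq, DualNumber.eps_mul_eps]
      ring
    have hepsn : (DualNumber.eps : DualNumber k) ^ n = 0 := by
      have h' : (DualNumber.eps : DualNumber k) ^ n =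
          DualNumber.eps * DualNumber.eps * DualNumber.eps ^ (n - 2) := by
        rw [← sq, ← pow_add]; congr 1; omega
      rw [h', DualNumber.eps_mul_eps, zero_mul]
    have hmap : Ideal.map φ J = ⊥ := by
      rw [hJ, Ideal.map_sup, Ideal.map_pow, mm, Ideal.map_span, Ideal.map_span]
      have h1 : Ideal.span (φ '' {Ω}) = ⊥ := by
        rw [Ideal.span_eq_bot]
        rintro x ⟨y, rfl, rfl⟩
        exact hφΩ
      have h2 : Ideal.span (φ '' {X 0, X 1, X 2}) ^ n = ⊥ := by
        have hle : Ideal.span (φ '' {X 0, X 1, X 2}) ≤ Ideal.span {DualNumber.eps} := by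
          apply Ideal.span_le.mpr
          rintro x ⟨y, hy, rfl⟩
          rcases hy with rfl | rfl | rfl
          · rw [hφ0]; exact Submodule.zero_mem _
          · rw [hφ1]; exact Submodule.zero_mem _
          · rw [hφ2]; exact Ideal.subset_span rfl
        have hle2 : Ideal.span (φ '' {X 0, X 1, X 2}) ^ n ≤ Ideal.span {DualNumber.eps} ^ n :=
          Ideal.pow_right_mono hle n
        rw [Ideal.span_singleton_pow, hepsn, Ideal.span_singleton_eq_bot.mpr rfl] at hle2
        exact le_bot_iff.mp hle2
      rw [h1, h2, sup_bot_eq]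
    have : φ (X 2) ∈ Ideal.map φ J := Ideal.mem_map_of_mem φ hX2J
    rw [hmap, Ideal.mem_bot, hφ2] at this
    have h10 := congrArg TrivSqZeroExt.snd this
    simp at h10
  refine ⟨fun hprime => hnot (hprime.mem_of_pow_mem _ hmem), hmem, hnot⟩
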